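/- arXiv:2306.08897 — 3 statements merged into one kernel-verified Lean document; each statement's English description precedes it below -/
import Mathlib

section
/- For every continuum X and every point x ∈ X, the blocked set B(x) = {y ∈ X : {x} blocks {y}} is connected. -/
open Set Metric TopologicalSpace unitInterval

variable {X : Type*} [MetricSpace X] [CompactSpace X] [ConnectedSpace X] [Nonempty X]

/-- An order arc in the hyperspace `C(X)`: a continuous map into nonempty compact
(connected-valued) subsets, strictly increasing with respect to inclusion. -/
def IsOrderArc {X : Type*} [MetricSpace X] (α : unitInterval → NonemptyCompacts X) : Prop :=
  Continuous α ∧ (∀ t, IsConnected (α t : Set X)) ∧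
    ∀ s t : unitInterval, s < t → (α s : Set X) ⊂ (α t : Set X)

/-- `B` blocks `A`: every continuous path in `2^X` from `A` to `X` meets `B`
at some time `t < 1`. -/
def Blocks {X : Type*} [MetricSpace X] (B A : Set X) : Prop :=
  ∀ γ : unitInterval → NonemptyCompacts X, Continuous γ →
    (γ 0 : Set X) = A → (γ 1 : Set X) = univ →
    ∃ t : unitInterval, t < 1 ∧ ((γ t : Set X) ∩ B).Nonempty

/-- The blocked set of a point `x`: all points `y` such that `{x}` blocks `{y}`. -/
def BlockedSet {X : Type*} [MetricSpace X] (x : X) : Set X :=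
  {y | Blocks {x} {y}}

/-- A nonblocker of singletons: a nonempty proper closed set `A` such that every
point outside `A` admits an order arc from its singleton to `X` avoiding `A`
at all times `t < 1`. -/
def IsNonBlocker {X : Type*} [MetricSpace X] (A : Set X) : Prop :=
  IsClosed A ∧ A.Nonempty ∧ A ≠ univ ∧
    ∀ x ∉ A, ∃ α : unitInterval → NonemptyCompacts X, IsOrderArc α ∧
      (α 0 : Set X) = {x} ∧ (α 1 : Set X) = univ ∧
      ∀ t : unitInterval, t < 1 → (α t : Set X) ∩ A = ∅

open Classical in
/-- `π(x)`: the intersection of all nonblockers of singletons containing `x`,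
or `X` if no such nonblocker exists. -/
noncomputable def piSet {X : Type*} [MetricSpace X] (x : X) : Set X :=
  if ∃ A : Set X, IsNonBlocker A ∧ x ∈ A then ⋂₀ {A : Set X | IsNonBlocker A ∧ x ∈ A}
  else univ

/-- The Kelley property of a continuum. -/
def KelleyContinuum (X : Type*) [MetricSpace X] : Prop :=
  ∀ ε > (0 : ℝ), ∃ δ > (0 : ℝ), ∀ p q : X, dist p q < δ →
    ∀ A : Set X, IsCompact A → IsConnected A → p ∈ A →
      ∃ B : Set X, IsCompact B ∧ IsConnected B ∧ q ∈ B ∧ hausdorffDist A B < ε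

/-- A shore set: a nonempty proper closed set which can be avoided by subcontinua
arbitrarily close (in Hausdorff distance) to the whole space. -/
def IsShoreSet {X : Type*} [MetricSpace X] (A : Set X) : Prop :=
  IsClosed A ∧ A.Nonempty ∧ A ≠ univ ∧
    ∀ ε > (0 : ℝ), ∃ B : Set X, IsCompact B ∧ IsConnected B ∧
      hausdorffDist B (univ : Set X) < ε ∧ B ∩ A = ∅

/-- A shore point: a point whose singleton is a shore set. -/
def IsShorePoint {X : Type*} [MetricSpace X] (x : X) : Prop :=
  IsShoreSet ({x} : Set X)

/-- Two points of `S` are joined by an arc lying in `S` (or are equal). -/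
def ArcIn {X : Type*} [MetricSpace X] (S : Set X) (x y : X) : Prop :=
  x = y ∨ ∃ f : unitInterval → X, Continuous f ∧ Function.Injective f ∧
    f 0 = x ∧ f 1 = y ∧ ∀ t, f t ∈ S

/-- A set is arcwise connected if any two of its points are joined by an arc in it. -/
def IsArcwiseConnected {X : Type*} [MetricSpace X] (S : Set X) : Prop :=
  ∀ x ∈ S, ∀ y ∈ S, ArcIn S x y

/-- The arc component of `x` in `S`. -/
def arcComponent {X : Type*} [MetricSpace X] (S : Set X) (x : X) : Set X :=
  {y | y ∈ S ∧ ArcIn S x y}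

/-- A continuum `K` is unicoherent if the intersection of any two subcontinua
whose union is `K` is connected. -/
def IsUnicoherent {X : Type*} [MetricSpace X] (K : Set X) : Prop :=
  ∀ A B : Set X, IsCompact A → IsConnected A → IsCompact B → IsConnected B →
    A ∪ B = K → IsConnected (A ∩ B)

/-- A dendroid: an arcwise connected, hereditarily unicoherent continuum. -/
def IsDendroid (X : Type*) [MetricSpace X] [CompactSpace X] [ConnectedSpace X]
    [Nonempty X] : Prop :=
  IsArcwiseConnected (univ : Set X) ∧
    ∀ K : Set X, IsCompact K → IsConnected K → IsUnicoherent K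

/-- A strong center: a point `p` for which there are nonempty open sets `U`, `V`
such that every arc from `U` to `V` passes through `p`. -/
def IsStrongCenter {X : Type*} [MetricSpace X] (p : X) : Prop :=
  ∃ U V : Set X, IsOpen U ∧ IsOpen V ∧ U.Nonempty ∧ V.Nonempty ∧
    ∀ f : unitInterval → X, Continuous f → Function.Injective f →
      f 0 ∈ U → f 1 ∈ V → ∃ t, f t = p

/-- A homogeneous space: any point can be mapped to any other by a self-homeomorphism. -/
def IsHomogeneous (X : Type*) [MetricSpace X] : Prop :=
  ∀ p q : X, ∃ h : X ≃ₜ X, h p = q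


/-!
Fix `y ∈ B(x)` with `y ≠ x`, and let `W` be the union of all subcontinua through `y` that miss
`x`. It is connected, and by boundary bumping `x ∈ closure W`; so `B(x)` is the union of the
connected sets `W ∪ {x}`, all containing `x`, once we know `W ⊆ B(x)`.

For that, let `K ∌ x` be a subcontinuum through `y` and `z`. A maximal chain of subcontinua from
`{y}` to `K` is an arc in the hyperspace: it is compact, boundary bumping makes it densely ordered,
and the continuous, strictly antitone map `L ↦ ∑ 2⁻ⁿ infDist (uₙ, L)` (for a dense sequence `u`)
embeds it onto a real interval. If `{z}` could escape to `X` avoiding `x`, so could `{y}`: first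
follow the arc to `K`, then take the union of `K` with the escape path of `{z}`.
-/

section Order

variable {α : Type*}

theorem IsCompact.ordConnected_of_exists_between [LinearOrder α] [TopologicalSpace α]
    [OrderClosedTopology α] {s : Set α} (hs : IsCompact s)
    (hbetween : ∀ a ∈ s, ∀ b ∈ s, a < b → ∃ c ∈ s, a < c ∧ c < b) : s.OrdConnected := by
  refine ⟨fun a ha b hb r ⟨har, hrb⟩ => ?_⟩
  by_contra hr
  obtain ⟨m, ⟨hms, ham, hmr⟩, hmax⟩ :=
    (hs.inter_right isClosed_Icc).exists_isGreatest ⟨a, ha, le_rfl, har⟩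
  obtain ⟨n, ⟨hns, hrn, hnb⟩, hmin⟩ :=
    (hs.inter_right isClosed_Icc).exists_isLeast ⟨b, hb, hrb, le_rfl⟩
  have hmr' : m < r := hmr.lt_of_ne fun h => hr (h ▸ hms)
  have hrn' : r < n := hrn.lt_of_ne fun h => hr (h ▸ hns)
  obtain ⟨c, hcs, hmc, hcn⟩ := hbetween m hms n hns (hmr'.trans hrn')
  rcases le_total c r with hcr | hrc
  · exact (hmax ⟨hcs, ham.trans hmc.le, hcr⟩).not_gt hmc
  · exact (hmin ⟨hcs, hrc, hcn.le.trans hnb⟩).not_gt hcn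

variable [PartialOrder α] {F C : Set α}

theorem IsChain.lt_of_strictAnti {β : Type*} [Preorder β] {f : α → β} (hf : StrictAnti f)
    (hC : IsChain (· ≤ ·) C) {a b : α} (ha : a ∈ C) (hb : b ∈ C) (hab : f a < f b) : b < a := by
  rcases hC.total ha hb with h | h
  · exact absurd (hf.antitone h) hab.not_ge
  · exact h.lt_of_ne (by rintro rfl; exact lt_irrefl _ hab)

theorem IsChain.injOn_of_strictAnti {β : Type*} [Preorder β] {f : α → β} (hf : StrictAnti f)
    (hC : IsChain (· ≤ ·) C) : InjOn f C := fun a ha b hb hab => by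
  by_contra hne
  rcases hC.total ha hb with h | h
  · exact (hf (h.lt_of_ne hne)).ne hab.symm
  · exact (hf (h.lt_of_ne (Ne.symm hne))).ne hab

theorem exists_maximal_isChain_subset {a : α} (ha : a ∈ F) :
    ∃ C, a ∈ C ∧ Maximal (fun C => C ⊆ F ∧ IsChain (· ≤ ·) C) C := by
  -- a maximal `r`-chain through `a` is a maximal chain inside `F`
  let r : α → α → Prop := fun b c => b ∈ F ∧ c ∈ F ∧ b ≤ c
  obtain ⟨M, hM, haM⟩ := (IsChain.singleton (r := r) (a := a)).exists_maxChain
  have hMF : M ⊆ F := fun b hb => by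
    rcases eq_or_ne b a with rfl | hne
    · exact ha
    · rcases hM.1 hb (haM rfl) hne with h | h
      exacts [h.1, h.2.1]
  refine ⟨M, haM rfl, ⟨hMF, hM.1.mono_rel fun _ _ h => h.2.2⟩, fun D ⟨hDF, hD⟩ hMD => ?_⟩
  refine (hM.2 (fun b hb c hc hne => ?_) hMD).ge
  exact (hD hb hc hne).imp (fun h => ⟨hDF hb, hDF hc, h⟩) fun h => ⟨hDF hc, hDF hb, h⟩

theorem Maximal.mem_of_forall_comparable
    (hC : Maximal (fun C => C ⊆ F ∧ IsChain (· ≤ ·) C) C) {b : α} (hb : b ∈ F)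
    (hcomp : ∀ c ∈ C, b ≤ c ∨ c ≤ b) : b ∈ C := by
  refine (hC.eq_of_subset ⟨insert_subset hb hC.prop.1, ?_⟩ (subset_insert b C)).symm ▸
    mem_insert b C
  exact hC.prop.2.insert fun c hc _ => hcomp c hc

theorem Maximal.exists_mem_between
    (hC : Maximal (fun C => C ⊆ F ∧ IsChain (· ≤ ·) C) C)
    (hF : ∀ a ∈ F, ∀ b ∈ F, a < b → ∃ c ∈ F, a < c ∧ c < b) {a b : α} (ha : a ∈ C)
    (hb : b ∈ C) (hab : a < b) : ∃ c ∈ C, a < c ∧ c < b := by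
  by_contra! hgap
  obtain ⟨c, hcF, hac, hcb⟩ := hF a (hC.prop.1 ha) b (hC.prop.1 hb) hab
  -- with no element of `C` strictly between `a` and `b`, `c` is comparable with all of `C`
  refine hgap c (hC.mem_of_forall_comparable hcF fun d hd => ?_) hac hcb
  rcases hC.prop.2.total hd ha with hda | had
  · exact Or.inr (hda.trans hac.le)
  rcases had.lt_or_eq with had | rfl
  · rcases hC.prop.2.total hd hb with hdb | hbd
    · rw [hdb.lt_or_eq.resolve_left (hgap d hd had)]
      exact Or.inl hcb.le
    · exact Or.inl (hcb.le.trans hbd)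
  · exact Or.inr hac.le

theorem Maximal.isClosed_of_isClosed [TopologicalSpace α] [ClosedIicTopology α]
    [ClosedIciTopology α] (hC : Maximal (fun C => C ⊆ F ∧ IsChain (· ≤ ·) C) C)
    (hF : IsClosed F) : IsClosed C := by
  refine closure_subset_iff_isClosed.mp fun b hb =>
    hC.mem_of_forall_comparable (closure_minimal hC.prop.1 hF hb) fun c hc => ?_
  refine closure_minimal (fun d hd => ?_) (isClosed_Iic.union isClosed_Ici) hb
  exact hC.prop.2.total hd hc

end Order

section PathConnected

variable {α β : Type*} [TopologicalSpace α] [TopologicalSpace β]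

theorem IsCompact.isPathConnected_of_injOn [T2Space β] {s : Set α} (hs : IsCompact s)
    {f : α → β} (hf : Continuous f) (hinj : InjOn f s) (himage : IsPathConnected (f '' s)) :
    IsPathConnected s := by
  have : CompactSpace s := isCompact_iff_compactSpace.mp hs
  have : PathConnectedSpace (f '' s) := isPathConnected_iff_pathConnectedSpace.mp himage
  let e : s ≃ₜ f '' s := Continuous.homeoOfEquivCompactToT2
    (f := Equiv.Set.imageOfInjOn f s hinj)
    ((hf.comp continuous_subtype_val).subtype_mk fun x => mem_image_of_mem f x.2)
  exact isPathConnected_iff_pathConnectedSpace.mpr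
    (e.symm.surjective.pathConnectedSpace e.symm.continuous)

theorem IsCompact.isPathConnected_of_injOn_of_exists_between {s : Set α} (hs : IsCompact s)
    (hne : s.Nonempty) {f : α → ℝ} (hf : Continuous f) (hinj : InjOn f s)
    (hbetween : ∀ a ∈ s, ∀ b ∈ s, f a < f b → ∃ c ∈ s, f a < f c ∧ f c < f b) :
    IsPathConnected s := by
  refine hs.isPathConnected_of_injOn hf hinj (Convex.isPathConnected ?_ (hne.image f))
  refine convex_iff_ordConnected.mpr ((hs.image hf).ordConnected_of_exists_between ?_)
  rintro _ ⟨a, ha, rfl⟩ _ ⟨b, hb, rfl⟩ hab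
  obtain ⟨c, hc, h⟩ := hbetween a ha b hb hab
  exact ⟨f c, mem_image_of_mem f hc, h⟩

end PathConnected

section BoundaryBumping

variable {α : Type*} [TopologicalSpace α] [T2Space α]

theorem exists_isClopen_of_connectedComponent_subset [CompactSpace α] {x : α} {U : Set α}
    (hU : IsOpen U) (h : connectedComponent x ⊆ U) : ∃ Z, IsClopen Z ∧ x ∈ Z ∧ Z ⊆ U := by
  rw [connectedComponent_eq_iInter_isClopen] at h
  obtain ⟨t, ht⟩ := hU.isClosed_compl.isCompact.elim_finite_subfamily_closed
    (fun Z : {Z : Set α // IsClopen Z ∧ x ∈ Z} => (Z : Set α)) (fun Z => Z.2.1.isClosed)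
    (eq_empty_of_forall_notMem fun y hy => hy.1 (h hy.2))
  refine ⟨⋂ Z ∈ t, (Z : Set α), isClopen_biInter_finset fun Z _ => Z.2.1,
    mem_iInter₂.mpr fun Z _ => Z.2.2, fun y hy => ?_⟩
  by_contra hyU
  exact (ht.subset ⟨hyU, hy⟩ : y ∈ (∅ : Set α))

theorem IsPreconnected.connectedComponentIn_inter_frontier_nonempty {N U : Set α}
    (hN : IsPreconnected N) (hNc : IsCompact N) (hU : IsOpen U) (hNU : ¬N ⊆ U) {m : α}
    (hm : m ∈ N ∩ closure U) :
    (_root_.connectedComponentIn (N ∩ closure U) m ∩ frontier U).Nonempty := by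
  set E := N ∩ closure U
  have : CompactSpace E := isCompact_iff_compactSpace.mp (hNc.inter_right isClosed_closure)
  by_contra hfr
  have hsub : connectedComponent (⟨m, hm⟩ : E) ⊆ Subtype.val ⁻¹' U := by
    intro e he
    by_contra heU
    refine hfr ⟨e, ?_, hU.frontier_eq ▸ ⟨e.2.2, heU⟩⟩
    rw [connectedComponentIn_eq_image hm]
    exact mem_image_of_mem _ he
  obtain ⟨Z, hZ, hmZ, hZU⟩ :=
    exists_isClopen_of_connectedComponent_subset (hU.preimage continuous_subtype_val) hsub
  have hZc : IsClosed (Subtype.val '' Z) :=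
    (hZ.isClosed.isCompact.image continuous_subtype_val).isClosed
  obtain ⟨O, hO, rfl⟩ := isOpen_induced_iff.mp hZ.isOpen
  -- the clopen piece of `E` around `m` stays inside `U`, hence is also clopen in `N`
  have hcover : N ⊆ (O ∩ U) ∪ (Subtype.val '' (Subtype.val ⁻¹' O : Set E))ᶜ := by
    intro w hw
    by_cases hwZ : w ∈ Subtype.val '' (Subtype.val ⁻¹' O : Set E)
    · obtain ⟨e, he, rfl⟩ := hwZ
      exact Or.inl ⟨he, hZU he⟩
    · exact Or.inr hwZ
  obtain ⟨n, hnN, hnU⟩ := not_subset.mp hNU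
  obtain ⟨w, hwN, ⟨hwO, hwU⟩, hwZ⟩ := hN _ _ (hO.inter hU) hZc.isOpen_compl hcover
    ⟨m, hm.1, hmZ, hZU hmZ⟩ ⟨n, hnN, fun ⟨e, he, hen⟩ => hnU (hen ▸ hZU he)⟩
  exact hwZ ⟨⟨w, hwN, subset_closure hwU⟩, hwO, rfl⟩

theorem IsPreconnected.exists_ssuperset_notMem {M N : Set α} {q : α}
    (hN : IsPreconnected N) (hNc : IsCompact N) (hM : IsPreconnected M) (hMc : IsCompact M)
    (hMne : M.Nonempty) (hMN : M ⊆ N) (hqN : q ∈ N) (hqM : q ∉ M) :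
    ∃ P, IsCompact P ∧ IsPreconnected P ∧ M ⊂ P ∧ P ⊆ N ∧ q ∉ P := by
  obtain ⟨U, V, hU, hV, hMU, hqV, hUV⟩ := SeparatedNhds.of_isCompact_isCompact hMc
    isCompact_singleton (disjoint_singleton_right.mpr hqM)
  have hqU : q ∉ closure U := fun hq => (hUV.closure_left hV).ne_of_mem hq (hqV rfl) rfl
  obtain ⟨m, hm⟩ := hMne
  have hME : M ⊆ N ∩ closure U := fun p hp => ⟨hMN hp, subset_closure (hMU hp)⟩
  have hPE := connectedComponentIn_subset (N ∩ closure U) m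
  have hPc : IsCompact (_root_.connectedComponentIn (N ∩ closure U) m) := by
    have : CompactSpace ↥(N ∩ closure U) :=
      isCompact_iff_compactSpace.mp (hNc.inter_right isClosed_closure)
    rw [connectedComponentIn_eq_image (hME hm)]
    exact isClosed_connectedComponent.isCompact.image continuous_subtype_val
  obtain ⟨p, hpP, hpU⟩ := hN.connectedComponentIn_inter_frontier_nonempty hNc hU
    (fun hNU => hqU (subset_closure (hNU hqN))) (hME hm)
  refine ⟨_, hPc, isPreconnected_connectedComponentIn,
    ⟨hM.subset_connectedComponentIn hm hME, fun hPM => (hU.frontier_eq ▸ hpU).2 (hMU (hPM hpP))⟩,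
    fun p hp => (hPE hp).1, fun hq => hqU (hPE hq).2⟩

end BoundaryBumping

namespace TopologicalSpace.NonemptyCompacts

section Topology

variable {α : Type*} [TopologicalSpace α]

theorem isClosed_setOf_superset [T1Space α] (s : Set α) :
    IsClosed {K : NonemptyCompacts α | s ⊆ K} := by
  have : {K : NonemptyCompacts α | s ⊆ K} =
      ⋂ x ∈ s, {K : NonemptyCompacts α | ((K : Set α) ∩ {x}).Nonempty} := by
    ext K
    simp [subset_def]
  rw [this]
  exact isClosed_biInter fun x _ => isClosed_inter_nonempty_of_isClosed isClosed_singleton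

instance [T1Space α] : ClosedIciTopology (NonemptyCompacts α) :=
  ⟨fun K => isClosed_setOf_superset (K : Set α)⟩

instance [T2Space α] : ClosedIicTopology (NonemptyCompacts α) :=
  ⟨fun K => isClosed_subsets_of_isClosed K.isCompact.isClosed⟩

theorem isClosed_setOf_isPreconnected [T2Space α] :
    IsClosed {K : NonemptyCompacts α | IsPreconnected (K : Set α)} := by
  refine isOpen_compl_iff.mp (isOpen_iff_forall_mem_open.mpr fun K hK => ?_)
  obtain ⟨u, v, hu, hv, hKuv, huv, hKu, hKv⟩ : ∃ u v, IsClosed u ∧ IsClosed v ∧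
      (K : Set α) ⊆ u ∪ v ∧ Disjoint u v ∧ ¬(K : Set α) ⊆ u ∧ ¬(K : Set α) ⊆ v := by
    simpa [isPreconnected_iff_subset_of_fully_disjoint_closed K.isCompact.isClosed] using hK
  obtain ⟨U, V, hU, hV, hKU, hKV, hUV⟩ := SeparatedNhds.of_isCompact_isCompact
    (K.isCompact.inter_right hu) (K.isCompact.inter_right hv)
    (huv.mono inter_subset_right inter_subset_right)
  refine ⟨{L | (L : Set α) ⊆ U ∪ V} ∩ {L | ((L : Set α) ∩ U).Nonempty} ∩
      {L | ((L : Set α) ∩ V).Nonempty}, ?_, ?_, ?_⟩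
  · rintro L ⟨⟨hLUV, hLU⟩, hLV⟩ hL
    obtain ⟨x, -, hxU, hxV⟩ := hL U V hU hV hLUV hLU hLV
    exact hUV.ne_of_mem hxU hxV rfl
  · exact ((isOpen_subsets_of_isOpen (hU.union hV)).inter
      (isOpen_inter_nonempty_of_isOpen hU)).inter (isOpen_inter_nonempty_of_isOpen hV)
  · obtain ⟨a, haK, hav⟩ := not_subset.mp hKv
    obtain ⟨b, hbK, hbu⟩ := not_subset.mp hKu
    refine ⟨⟨fun x hx => ?_, a, haK, hKU ⟨haK, (hKuv haK).resolve_right hav⟩⟩,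
      b, hbK, hKV ⟨hbK, (hKuv hbK).resolve_left hbu⟩⟩
    rcases hKuv hx with hxu | hxv
    exacts [Or.inl (hKU ⟨hx, hxu⟩), Or.inr (hKV ⟨hx, hxv⟩)]

theorem exists_isPreconnected_between [T2Space α] {M N : NonemptyCompacts α}
    (hM : IsPreconnected (M : Set α)) (hN : IsPreconnected (N : Set α)) (hMN : M < N) :
    ∃ P : NonemptyCompacts α, IsPreconnected (P : Set α) ∧ M < P ∧ P < N := by
  obtain ⟨q, hqN, hqM⟩ := exists_of_ssubset (SetLike.coe_ssubset_coe.mpr hMN)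
  obtain ⟨P, hPc, hP, hMP, hPN, hqP⟩ :=
    hN.exists_ssuperset_notMem N.isCompact hM M.isCompact M.nonempty hMN.le hqN hqM
  exact ⟨⟨⟨P, hPc⟩, M.nonempty.mono hMP.subset⟩, hP, SetLike.coe_ssubset_coe.mp hMP,
    SetLike.coe_ssubset_coe.mp ⟨hPN, fun h => hqP (h hqN)⟩⟩

end Topology

section InfDistSeries

variable {α : Type*} [MetricSpace α] [CompactSpace α]

noncomputable def infDistSeries (u : ℕ → α) (K : NonemptyCompacts α) : ℝ :=
  ∑' n, (1 / 2 : ℝ) ^ n * infDist (u n) K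

theorem norm_infDistSeries_term_le (u : ℕ → α) (n : ℕ) (K : NonemptyCompacts α) :
    ‖(1 / 2 : ℝ) ^ n * infDist (u n) K‖ ≤ (1 / 2 : ℝ) ^ n * diam (univ : Set α) := by
  obtain ⟨k, hk⟩ := K.nonempty
  rw [Real.norm_of_nonneg (mul_nonneg (by positivity) infDist_nonneg)]
  gcongr
  exact (infDist_le_dist_of_mem hk).trans
    (dist_le_diam_of_mem isCompact_univ.isBounded (mem_univ _) (mem_univ _))

theorem summable_infDistSeries (u : ℕ → α) (K : NonemptyCompacts α) :
    Summable fun n => (1 / 2 : ℝ) ^ n * infDist (u n) K :=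
  Summable.of_norm_bounded (summable_geometric_two.mul_right _)
    fun n => norm_infDistSeries_term_le u n K

theorem continuous_infDistSeries (u : ℕ → α) : Continuous (infDistSeries u) :=
  continuous_tsum (fun n => continuous_const.mul (lipschitz_infDist_set (u n)).continuous)
    (summable_geometric_two.mul_right _) (norm_infDistSeries_term_le u)

theorem strictAnti_infDistSeries {u : ℕ → α} (hu : DenseRange u) :
    StrictAnti (infDistSeries u) := by
  intro K L hKL
  obtain ⟨b, hbL, hbK⟩ := exists_of_ssubset (SetLike.coe_ssubset_coe.mpr hKL)
  have hε : 0 < infDist b K :=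
    (K.isCompact.isClosed.notMem_iff_infDist_pos K.nonempty).mp hbK
  obtain ⟨n, hn⟩ := hu.exists_dist_lt b (half_pos hε)
  refine Summable.tsum_lt_tsum (i := n) (fun m => ?_) ?_ (summable_infDistSeries u L)
    (summable_infDistSeries u K)
  · gcongr
    exact infDist_le_infDist_of_subset hKL.le K.nonempty
  · gcongr
    calc infDist (u n) L ≤ dist (u n) b := infDist_le_dist_of_mem hbL
      _ < infDist b K - dist b (u n) := by rw [dist_comm]; linarith
      _ ≤ infDist (u n) K := by
        linarith [infDist_le_infDist_add_dist (s := (K : Set α)) (x := b) (y := u n)]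

theorem joinedIn_Iic_of_isPreconnected {A K : NonemptyCompacts α}
    (hA : IsPreconnected (A : Set α)) (hK : IsPreconnected (K : Set α)) (hAK : A ≤ K) :
    JoinedIn (Iic K) A K := by
  set F := {L : NonemptyCompacts α | IsPreconnected (L : Set α)} ∩ Iic K
  obtain ⟨C, hAC, hC⟩ := exists_maximal_isChain_subset (show A ∈ F from ⟨hA, hAK⟩)
  have hKC : K ∈ C :=
    hC.mem_of_forall_comparable ⟨hK, mem_Iic.mpr le_rfl⟩ fun L hL => Or.inr (hC.prop.1 hL).2
  have hFdense : ∀ M ∈ F, ∀ N ∈ F, M < N → ∃ P ∈ F, M < P ∧ P < N := by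
    intro M hM N hN hMN
    obtain ⟨P, hP, hMP, hPN⟩ := exists_isPreconnected_between hM.1 hN.1 hMN
    exact ⟨P, ⟨hP, hPN.le.trans hN.2⟩, hMP, hPN⟩
  have hCcompact : IsCompact C :=
    (hC.isClosed_of_isClosed (isClosed_setOf_isPreconnected.inter isClosed_Iic)).isCompact
  have : Nonempty α := ⟨A.nonempty.some⟩
  obtain ⟨u, hu⟩ := exists_dense_seq α
  have hanti := strictAnti_infDistSeries hu
  refine ((hCcompact.isPathConnected_of_injOn_of_exists_between ⟨A, hAC⟩
    (continuous_infDistSeries u) (hC.prop.2.injOn_of_strictAnti hanti)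
    fun P hP Q hQ hPQ => ?_).joinedIn A hAC K hKC).mono fun L hL => (hC.prop.1 hL).2
  obtain ⟨R, hR, hQR, hRP⟩ :=
    hC.exists_mem_between hFdense hQ hP (hC.prop.2.lt_of_strictAnti hanti hP hQ hPQ)
  exact ⟨R, hR, hanti hRP, hanti hQR⟩

end InfDistSeries

end TopologicalSpace.NonemptyCompacts

section BlockedSet

variable {α : Type*} [MetricSpace α]

theorem mem_blockedSet_self (x : α) : x ∈ BlockedSet x :=
  fun γ _ hγ0 _ => ⟨0, zero_lt_one, x, by rw [hγ0]; exact ⟨rfl, rfl⟩⟩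

theorem Blocks.of_isPreconnected [CompactSpace α] {K : Set α} (hKc : IsCompact K)
    (hK : IsPreconnected K) {x y z : α} (hxK : x ∉ K) (hyK : y ∈ K) (hzK : z ∈ K)
    (hy : Blocks {x} {y}) : Blocks {x} {z} := by
  intro γ hγ hγ0 hγ1
  by_contra! hγx
  let K' : NonemptyCompacts α := ⟨⟨K, hKc⟩, y, hyK⟩
  obtain ⟨p, hp⟩ := NonemptyCompacts.joinedIn_Iic_of_isPreconnected (A := {y}) (K := K')
    isPreconnected_singleton hK (singleton_subset_iff.mpr hyK)
  let q : Path K' (K' ⊔ γ 1) :=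
    { toFun := fun t => K' ⊔ γ t
      continuous_toFun := continuous_const.sup hγ
      source' := SetLike.coe_injective <| by
        rw [NonemptyCompacts.coe_sup, hγ0]
        exact union_eq_left.mpr (singleton_subset_iff.mpr hzK)
      target' := rfl }
  obtain ⟨t, ht, w, hwt, rfl⟩ := hy (p.trans q) (p.trans q).continuous
    (by simp) (by simp [q, hγ1])
  rw [Path.trans_apply] at hwt
  split_ifs at hwt
  · exact hxK (hp _ hwt)
  · refine hwt.elim hxK fun hw => (hγx _ ?_).subset ⟨hw, rfl⟩
    show 2 * (t : ℝ) - 1 < 1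
    linarith [show (t : ℝ) < 1 from ht]

def continuaAvoiding (x y : α) : Set (Set α) :=
  {K | IsCompact K ∧ IsPreconnected K ∧ y ∈ K ∧ x ∉ K}

theorem singleton_mem_continuaAvoiding {x y : α} (hxy : x ≠ y) :
    {y} ∈ continuaAvoiding x y :=
  ⟨isCompact_singleton, isPreconnected_singleton, rfl, hxy⟩

theorem isPreconnected_sUnion_continuaAvoiding (x y : α) :
    IsPreconnected (⋃₀ continuaAvoiding x y) :=
  isPreconnected_sUnion y _ (fun _ hK => hK.2.2.1) fun _ hK => hK.2.1

theorem sUnion_continuaAvoiding_subset_blockedSet [CompactSpace α] {x y : α}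
    (hy : y ∈ BlockedSet x) : ⋃₀ continuaAvoiding x y ⊆ BlockedSet x := by
  rintro z ⟨K, ⟨hKc, hK, hyK, hxK⟩, hzK⟩
  exact hy.of_isPreconnected hKc hK hxK hyK hzK

theorem mem_closure_sUnion_continuaAvoiding [CompactSpace α] [PreconnectedSpace α] {x y : α}
    (hxy : x ≠ y) : x ∈ closure (⋃₀ continuaAvoiding x y) := by
  set W := ⋃₀ continuaAvoiding x y
  by_contra hx
  have hyW : y ∈ closure W := subset_closure ⟨{y}, singleton_mem_continuaAvoiding hxy, rfl⟩
  obtain ⟨P, hPc, hP, hWP, -, hxP⟩ := isPreconnected_univ.exists_ssuperset_notMem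
    isCompact_univ (isPreconnected_sUnion_continuaAvoiding x y).closure
    isClosed_closure.isCompact ⟨y, hyW⟩ (subset_univ _) (mem_univ x) hx
  have hPW : P ∈ continuaAvoiding x y := ⟨hPc, hP, hWP.subset hyW, hxP⟩
  exact hWP.not_subset ((subset_sUnion_of_mem hPW).trans subset_closure)

end BlockedSet

theorem blocked_set_connected (x : X) : IsConnected (BlockedSet x) := by
  refine ⟨⟨x, mem_blockedSet_self x⟩, isPreconnected_of_forall x fun y hy => ?_⟩
  rcases eq_or_ne x y with rfl | hxy
  · exact ⟨{x}, singleton_subset_iff.mpr hy, rfl, rfl, isPreconnected_singleton⟩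
  refine ⟨insert x (⋃₀ continuaAvoiding x y),
    insert_subset (mem_blockedSet_self x) (sUnion_continuaAvoiding_subset_blockedSet hy),
    mem_insert x _, mem_insert_of_mem x ⟨{y}, singleton_mem_continuaAvoiding hxy, rfl⟩, ?_⟩
  exact (isPreconnected_sUnion_continuaAvoiding x y).subset_closure (subset_insert x _)
    (insert_subset (mem_closure_sUnion_continuaAvoiding hxy) subset_closure)
end

section
/- Let X be a dendroid and A ∈ 2^X. Then A is a nonblocker of singletons of X if and only if A has empty interior and each arc component of X − A is dense in X. -/
open Set Metric TopologicalSpace unitInterval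

variable {X : Type*} [MetricSpace X] [CompactSpace X] [ConnectedSpace X] [Nonempty X]

/-!
Forward: before time `1` the order arc from `{x}` consists of continua containing `x` and missing
`A`. In a dendroid an arc joining two points of a continuum lies in it (unicoherence of the union),
so these continua lie in the arc component of `x` in `Aᶜ`, and they converge to `X`.

Backward: join `x` by arcs in `Aᶜ` to a dense sequence of its arc component and draw them one
after another, the `k`-th during `[1 - 2⁻ᵏ, 1 - 2⁻ᵏ⁻¹]`. At each time `t < 1` only finitely many
arcs have started, which gives compactness and continuity; near `t = 1` the drawn endpoints form
finer and finer nets of `X`. This monotone path in `C(X)` becomes an order arc after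
reparametrizing it by a Whitney-type map, which collapses the intervals where it is constant.
-/

section Forward

variable {X : Type*} [MetricSpace X]

theorem IsUnicoherent.range_subset {K : Set X} {f : I → X} (hu : IsUnicoherent (K ∪ range f))
    (hK : IsCompact K) (hKc : IsConnected K) (hf : Continuous f) (hinj : Function.Injective f)
    (h0 : f 0 ∈ K) (h1 : f 1 ∈ K) : range f ⊆ K := by
  have hmeet : IsPreconnected (f ⁻¹' (K ∩ range f)) :=
    (hu K (range f) hK hKc (isCompact_range hf) (isConnected_range hf) rfl).isPreconnected
      |>.preimage_of_isClosedMap hinj hf.isClosedMap inter_subset_right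
  rintro _ ⟨t, rfl⟩
  exact (hmeet.Icc_subset ⟨h0, mem_range_self 0⟩ ⟨h1, mem_range_self 1⟩ ⟨t.2.1, t.2.2⟩).1

theorem NonemptyCompacts.subset_closure_iUnion_lt_one {α : I → NonemptyCompacts X}
    (hα : Continuous α) : (α 1 : Set X) ⊆ closure (⋃ t < 1, (α t : Set X)) := by
  intro p hp
  refine Metric.mem_closure_iff.2 fun ε hε => ?_
  have h1 : (1 : I) ∈ closure (Iio 1) := by
    rw [closure_Iio' ⟨0, zero_lt_one⟩]; exact mem_Iic.2 le_rfl
  obtain ⟨t, ht1, ht⟩ := ((mem_closure_iff_frequently.1 h1).and_eventually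
    (Metric.tendsto_nhds.1 (hα.tendsto 1) ε hε)).exists
  obtain ⟨q, hq, hqp⟩ := exists_dist_lt_of_hausdorffDist_lt' hp ht (edist_ne_top (α t) (α 1))
  exact ⟨q, mem_biUnion ht1 hq, by rwa [dist_comm]⟩

end Forward

theorem IsDendroid.subset_arcComponent (hX : IsDendroid X) {K S : Set X} (hK : IsCompact K)
    (hKc : IsConnected K) (hKS : K ⊆ S) {x : X} (hx : x ∈ K) : K ⊆ arcComponent S x := by
  intro q hq
  refine ⟨hKS hq, ?_⟩
  obtain rfl | ⟨f, hf, hinj, rfl, rfl, -⟩ := hX.1 x trivial q trivial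
  · exact Or.inl rfl
  have hsub : range f ⊆ K :=
    (hX.2 _ (hK.union (isCompact_range hf)) (hKc.union ⟨f 0, hx, mem_range_self 0⟩
      (isConnected_range hf))).range_subset hK hKc hf hinj hx hq
  exact Or.inr ⟨f, hf, hinj, rfl, rfl, fun t => hKS (hsub (mem_range_self t))⟩

theorem IsNonBlocker.dense_arcComponent (hX : IsDendroid X) {A : Set X} (hA : IsNonBlocker A)
    {x : X} (hx : x ∉ A) : Dense (arcComponent Aᶜ x) := by
  obtain ⟨α, ⟨hαc, hαconn, hαmono⟩, hα0, hα1, hαA⟩ := hA.2.2.2 x hx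
  have hxα : ∀ t, x ∈ (α t : Set X) := fun t =>
    (show StrictMono fun t => (α t : Set X) from hαmono).monotone unitInterval.nonneg'
      (by rw [hα0]; exact mem_singleton x)
  have hsub : ⋃ t < 1, (α t : Set X) ⊆ arcComponent Aᶜ x := iUnion₂_subset fun t ht =>
    hX.subset_arcComponent (α t).isCompact (hαconn t)
      (fun p hp hpA => (hαA t ht).subset ⟨hp, hpA⟩) (hxα t)
  refine dense_iff_closure_eq.2 (eq_univ_of_forall fun p => closure_mono hsub ?_)
  exact NonemptyCompacts.subset_closure_iUnion_lt_one hαc (hα1 ▸ mem_univ p)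

section Reparametrization

theorem continuous_comp_of_rightInverse {Y Z W : Type*} [TopologicalSpace Y] [CompactSpace Y]
    [TopologicalSpace Z] [T2Space Z] [TopologicalSpace W] {f : Y → Z} {φ : Z → Y} {K : Y → W}
    (hf : Continuous f) (hφ : Function.RightInverse φ f) (hK : Continuous K)
    (hKf : ∀ a b, f a = f b → K a = K b) : Continuous (K ∘ φ) :=
  (hf.isClosedMap.isQuotientMap hf hφ.surjective).continuous_iff.2 <| by
    convert hK using 1
    exact funext fun a => hKf _ _ (hφ (f a))

variable {X : Type*} [MetricSpace X] [CompactSpace X]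

/-- A Whitney-type map: `K ↦ ∑ 2⁻ⁿ d(zₙ, K)` for a dense sequence `z`. -/
theorem NonemptyCompacts.exists_continuous_strictAnti [Nonempty X] :
    ∃ ν : NonemptyCompacts X → ℝ, Continuous ν ∧ StrictAnti ν := by
  obtain ⟨z, hz⟩ := exists_dense_seq X
  have hbound : ∀ n (K : NonemptyCompacts X),
      ‖(1 / 2 : ℝ) ^ n * infDist (z n) K‖ ≤ (1 / 2) ^ n * diam (univ : Set X) := fun n K => by
    obtain ⟨k, hk⟩ := K.nonempty
    rw [Real.norm_of_nonneg (mul_nonneg (by positivity) infDist_nonneg)]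
    exact mul_le_mul_of_nonneg_left ((infDist_le_dist_of_mem hk).trans
      (dist_le_diam_of_mem isCompact_univ.isBounded trivial trivial)) (by positivity)
  have hsum := summable_geometric_two.mul_right (diam (univ : Set X))
  refine ⟨fun K => ∑' n, (1 / 2 : ℝ) ^ n * infDist (z n) K,
    continuous_tsum (fun n => continuous_const.mul (lipschitz_infDist_set _).continuous) hsum
      hbound, fun K L hKL => ?_⟩
  obtain ⟨p, hpL, hpK⟩ := exists_of_ssubset (SetLike.coe_ssubset_coe.2 hKL)
  have hr : 0 < infDist p K := (K.isCompact.isClosed.notMem_iff_infDist_pos K.nonempty).1 hpK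
  obtain ⟨n, hn⟩ := Metric.denseRange_iff.1 hz p _ (half_pos hr)
  have hL : infDist (z n) L < infDist p K / 2 :=
    (infDist_le_dist_of_mem hpL).trans_lt (by rwa [dist_comm])
  have hK : infDist p K ≤ infDist (z n) K + dist p (z n) := infDist_le_infDist_add_dist
  refine Summable.tsum_lt_tsum_of_nonneg (i := n)
    (fun _ => mul_nonneg (by positivity) infDist_nonneg)
    (fun _ => mul_le_mul_of_nonneg_left
      (infDist_le_infDist_of_subset (SetLike.coe_subset_coe.2 hKL.le) K.nonempty) (by positivity))
    (mul_lt_mul_of_pos_left (by linarith) (by positivity))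
    ((summable_geometric_two.mul_right _).of_norm_bounded (hbound · K))

theorem exists_strictMono_reparam {K : I → NonemptyCompacts X} (hK : Continuous K)
    (hmono : Monotone K) (h01 : K 0 < K 1) :
    ∃ φ : I → I, Continuous (K ∘ φ) ∧ StrictMono (K ∘ φ) ∧ K (φ 0) = K 0 ∧ K (φ 1) = K 1 ∧
      ∀ u < 1, φ u < 1 := by
  have : Nonempty X := (K 0).nonempty.to_type
  obtain ⟨ν, hνc, hν⟩ := NonemptyCompacts.exists_continuous_strictAnti (X := X)
  have hc : 0 < ν (K 0) - ν (K 1) := sub_pos.2 (hν h01)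
  set H : NonemptyCompacts X → ℝ := fun L => (ν (K 0) - ν L) / (ν (K 0) - ν (K 1))
  have hHmem : ∀ t, H (K t) ∈ I := fun t =>
    ⟨div_nonneg (sub_nonneg.2 (hν.antitone (hmono unitInterval.nonneg'))) hc.le,
      div_le_one_of_le₀ (sub_le_sub_left (hν.antitone (hmono unitInterval.le_one')) _) hc.le⟩
  set h : I → I := fun t => ⟨H (K t), hHmem t⟩
  have hhc : Continuous h :=
    ((continuous_const.sub (hνc.comp hK)).div_const _).subtype_mk _
  have hh0 : h 0 = 0 := Subtype.ext (by simp [h, H])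
  have hh1 : h 1 = 1 := Subtype.ext (by simp [h, H, hc.ne'])
  have hhmono : Monotone h := fun s t hst =>
    div_le_div_of_nonneg_right (sub_le_sub_left (hν.antitone (hmono hst)) _) hc.le
  have hsurj : Function.Surjective h := fun u => intermediate_value_univ 0 1 hhc
    (by rw [hh0, hh1]; exact ⟨u.2.1, u.2.2⟩)
  set φ := Function.surjInv hsurj
  have hφ : Function.RightInverse φ h := Function.rightInverse_surjInv hsurj
  have hfib : ∀ a b, h a = h b → K a = K b := by
    suffices ∀ a b, a ≤ b → h a = h b → K a = K b from fun a b hab =>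
      (le_total a b).elim (this a b · hab) fun hba => (this b a hba hab.symm).symm
    intro a b hab hhab
    refine (hmono hab).eq_of_not_lt fun hlt => (hν hlt).ne ?_
    have := congrArg Subtype.val hhab
    simp only [h, H] at this
    field_simp at this
    linarith
  refine ⟨φ, continuous_comp_of_rightInverse hhc hφ hK hfib, fun u v huv => ?_,
    hfib _ _ (by rw [hφ, hh0]), hfib _ _ (by rw [hφ, hh1]),
    fun u hu => unitInterval.le_one'.lt_of_ne fun h1 => hu.ne (by rw [← hφ u, h1, hh1])⟩
  refine (hmono (hhmono.reflect_lt (by rwa [hφ u, hφ v])).le).lt_of_ne fun heq => huv.ne ?_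
  rw [← hφ u, ← hφ v]
  exact Subtype.ext (congrArg H heq)

end Reparametrization

section Sweep

variable {X : Type*} {g : ℕ → I → X} {x : X}

/-- Arc `k` of the sweep is drawn during the time interval `[1 - 2⁻ᵏ, 1 - 2⁻ᵏ⁻¹]`. -/
noncomputable def sweepRamp (k : ℕ) (t : I) : I :=
  projIcc 0 1 zero_le_one (2 ^ (k + 1) * (t - 1) + 2)

theorem continuous_sweepRamp (k : ℕ) : Continuous (sweepRamp k) :=
  continuous_projIcc.comp (by fun_prop)

theorem monotone_sweepRamp (k : ℕ) : Monotone (sweepRamp k) := fun s t hst =>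
  monotone_projIcc _ (by gcongr)

theorem sweepRamp_eq_zero {k : ℕ} {t : I} (h : 1 ≤ 2 ^ k * (1 - (t : ℝ))) :
    sweepRamp k t = 0 :=
  projIcc_of_le_left _ (by rw [pow_succ]; linarith)

theorem sweepRamp_eq_one {k : ℕ} {t : I} (h : 2 ^ (k + 1) * (1 - (t : ℝ)) ≤ 1) :
    sweepRamp k t = 1 :=
  projIcc_of_right_le _ (by linarith)

theorem exists_one_lt_two_pow_mul {t : ℝ} (ht : t < 1) : ∃ N : ℕ, 1 < 2 ^ N * (1 - t) := by
  obtain ⟨N, hN⟩ := pow_unbounded_of_one_lt (1 - t)⁻¹ one_lt_two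
  exact ⟨N, by rwa [inv_lt_iff_one_lt_mul₀ (sub_pos.2 ht)] at hN⟩

def sweep (g : ℕ → I → X) (t : I) : Set X :=
  if t < 1 then ⋃ k, range fun s => g k (min s (sweepRamp k t)) else univ

theorem sweep_one (g : ℕ → I → X) : sweep g 1 = univ := if_neg (lt_irrefl 1)

theorem mem_sweep (hg0 : ∀ k, g k 0 = x) (t : I) : x ∈ sweep g t := by
  unfold sweep
  split_ifs
  · exact mem_iUnion.2 ⟨0, 0, by simp [hg0]⟩
  · trivial

theorem sweep_zero (hg0 : ∀ k, g k 0 = x) : sweep g 0 = {x} := by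
  refine subset_antisymm ?_ (singleton_subset_iff.2 (mem_sweep hg0 0))
  rw [sweep, if_pos zero_lt_one]
  rintro _ ⟨_, ⟨k, rfl⟩, s, rfl⟩
  simp [sweepRamp_eq_zero (k := k) (t := 0) (by simp [one_le_pow₀]), hg0]

theorem monotone_sweep (g : ℕ → I → X) : Monotone (sweep g) := by
  intro s t hst
  unfold sweep
  split_ifs with hs ht
  · rintro _ ⟨_, ⟨k, rfl⟩, a, rfl⟩
    refine mem_iUnion.2 ⟨k, min a (sweepRamp k s), ?_⟩
    simp only [min_assoc, min_eq_left (monotone_sweepRamp k hst)]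
  · exact subset_univ _
  · exact absurd (hst.trans_lt ‹t < 1›) hs
  · exact subset_rfl

theorem endpoint_mem_sweep {k : ℕ} {t : I} (h : 2 ^ (k + 1) * (1 - (t : ℝ)) ≤ 1) :
    g k 1 ∈ sweep g t := by
  unfold sweep
  split_ifs
  · exact mem_iUnion.2 ⟨k, 1, by simp [sweepRamp_eq_one h]⟩
  · trivial

theorem sweep_subset {t : I} (ht : t < 1) : sweep g t ⊆ ⋃ k, range (g k) := by
  rw [sweep, if_pos ht]
  exact iUnion_mono fun k => range_comp_subset_range _ (g k)

theorem sweep_eq_range (hg0 : ∀ k, g k 0 = x) {N : ℕ} {t : I}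
    (ht : 1 ≤ 2 ^ N * (1 - (t : ℝ))) :
    sweep g t = range fun p : Fin (N + 1) × I => g p.1 (min p.2 (sweepRamp p.1 t)) := by
  have ht1 : t < 1 := lt_of_le_of_ne unitInterval.le_one' fun h => by norm_num [h] at ht
  rw [sweep, if_pos ht1]
  refine subset_antisymm ?_ fun _ ⟨p, hp⟩ => mem_iUnion.2 ⟨p.1, p.2, hp⟩
  rintro _ ⟨_, ⟨k, rfl⟩, s, rfl⟩
  rcases le_or_gt k N with hk | hk
  · exact ⟨(⟨k, Nat.lt_succ_of_le hk⟩, s), rfl⟩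
  · have h0 : sweepRamp k t = 0 := sweepRamp_eq_zero <| ht.trans <|
      mul_le_mul_of_nonneg_right (pow_le_pow_right₀ one_le_two hk.le) (sub_nonneg.2 t.2.2)
    exact ⟨(0, 0), by simp [h0, hg0]⟩

variable [TopologicalSpace X]

theorem isConnected_sweep [ConnectedSpace X] (hgc : ∀ k, Continuous (g k))
    (hg0 : ∀ k, g k 0 = x) (t : I) : IsConnected (sweep g t) := by
  unfold sweep
  split_ifs
  · refine ⟨⟨x, mem_iUnion.2 ⟨0, 0, by simp [hg0]⟩⟩, isPreconnected_iUnion ?_ fun k =>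
      isPreconnected_range ((hgc k).comp (continuous_id.min continuous_const))⟩
    exact ⟨x, mem_iInter.2 fun k => ⟨0, by simp [hg0]⟩⟩
  · exact isConnected_univ

theorem continuous_sweepStage (hgc : ∀ k, Continuous (g k)) (N : ℕ) :
    Continuous fun q : I × (Fin (N + 1) × I) => g q.2.1 (min q.2.2 (sweepRamp q.2.1 q.1)) := by
  have : Continuous fun q : Fin (N + 1) × (I × I) => g q.1 (min q.2.2 (sweepRamp q.1 q.2.1)) :=
    continuous_prod_of_discrete_left.2 fun k =>
      (hgc k).comp (continuous_snd.min ((continuous_sweepRamp k).comp continuous_fst))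
  exact this.comp ((continuous_fst.comp continuous_snd).prodMk
    (continuous_fst.prodMk (continuous_snd.comp continuous_snd)))

theorem isCompact_sweep [CompactSpace X] (hgc : ∀ k, Continuous (g k)) (hg0 : ∀ k, g k 0 = x)
    (t : I) : IsCompact (sweep g t) := by
  rcases unitInterval.le_one'.lt_or_eq (a := t) with ht | rfl
  · obtain ⟨N, hN⟩ := exists_one_lt_two_pow_mul ht
    rw [sweep_eq_range hg0 hN.le]
    exact isCompact_range ((continuous_sweepStage hgc N).comp (Continuous.prodMk_right t))
  · rw [sweep_one]
    exact isCompact_univ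

end Sweep

section SweepContinuity

open Topology

variable {X : Type*} [MetricSpace X]

theorem continuousAt_of_eventually_eq_range {T Y : Type*} [TopologicalSpace T]
    [TopologicalSpace Y] [CompactSpace Y] {K : T → NonemptyCompacts X} {F : T → Y → X}
    (hF : Continuous (Function.uncurry F)) {t₀ : T}
    (hK : ∀ᶠ t in 𝓝 t₀, (K t : Set X) = range (F t)) : ContinuousAt K t₀ := by
  set Φ : C(T, C(Y, X)) := ContinuousMap.curry ⟨_, hF⟩
  have hdist : ∀ t y, dist (F t y) (F t₀ y) ≤ dist (Φ t) (Φ t₀) := fun t y =>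
    ContinuousMap.dist_apply_le_dist (f := Φ t) (g := Φ t₀) y
  refine Metric.tendsto_nhds.2 fun ε hε => ?_
  filter_upwards [hK, Metric.tendsto_nhds.1 (Φ.continuous.tendsto t₀) ε hε] with t ht htε
  rw [NonemptyCompacts.dist_eq, ht, hK.self_of_nhds]
  refine (hausdorffDist_le_of_mem_dist dist_nonneg ?_ ?_).trans_lt htε
  · rintro _ ⟨y, rfl⟩
    exact ⟨F t₀ y, mem_range_self y, hdist t y⟩
  · rintro _ ⟨y, rfl⟩
    exact ⟨F t y, mem_range_self y, dist_comm (F t₀ y) (F t y) ▸ hdist t y⟩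

theorem DenseRange.exists_forall_dist_lt [CompactSpace X] {y : ℕ → X} (hy : DenseRange y)
    {ε : ℝ} (hε : 0 < ε) : ∃ M, ∀ p, ∃ k ≤ M, dist p (y k) < ε := by
  obtain ⟨s, hs⟩ := isCompact_univ.elim_finite_subcover (fun k => ball (y k) ε)
    (fun _ => isOpen_ball) fun p _ => mem_iUnion.2 (Metric.denseRange_iff.1 hy p ε hε)
  refine ⟨s.sup id, fun p => ?_⟩
  obtain ⟨k, hk, hpk⟩ := mem_iUnion₂.1 (hs (mem_univ p))
  exact ⟨k, Finset.le_sup (f := id) hk, hpk⟩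

variable {g : ℕ → I → X} {x : X}

theorem continuous_sweep [CompactSpace X] (hgc : ∀ k, Continuous (g k)) (hg0 : ∀ k, g k 0 = x)
    (hg1 : DenseRange fun k => g k 1) {K : I → NonemptyCompacts X}
    (hK : ∀ t, (K t : Set X) = sweep g t) : Continuous K := by
  refine continuous_iff_continuousAt.2 fun t₀ => ?_
  rcases unitInterval.le_one'.lt_or_eq (a := t₀) with ht₀ | rfl
  · obtain ⟨N, hN⟩ := exists_one_lt_two_pow_mul ht₀
    have hnear : ∀ᶠ t : I in 𝓝 t₀, 1 < 2 ^ N * (1 - (t : ℝ)) :=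
      (continuous_const.mul (continuous_const.sub continuous_subtype_val)).continuousAt
        |>.eventually_const_lt hN
    exact continuousAt_of_eventually_eq_range (continuous_sweepStage hgc N) <|
      hnear.mono fun t ht => (hK t).trans (sweep_eq_range hg0 ht.le)
  · refine Metric.tendsto_nhds.2 fun ε hε => ?_
    obtain ⟨M, hM⟩ := hg1.exists_forall_dist_lt (half_pos hε)
    have hnear : ∀ᶠ t : I in 𝓝 1, 2 ^ (M + 1) * (1 - (t : ℝ)) < 1 :=
      (continuous_const.mul (continuous_const.sub continuous_subtype_val)).continuousAt
        |>.eventually_lt_const (by simp)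
    filter_upwards [hnear] with t ht
    rw [NonemptyCompacts.dist_eq, hK, hK, sweep_one]
    refine (hausdorffDist_le_of_mem_dist (half_pos hε).le
      (fun p _ => ⟨p, trivial, by rw [dist_self]; positivity⟩) fun p _ => ?_).trans_lt
      (half_lt_self hε)
    obtain ⟨k, hkM, hpk⟩ := hM p
    have hk : 2 ^ (k + 1) * (1 - (t : ℝ)) ≤ 2 ^ (M + 1) * (1 - (t : ℝ)) :=
      mul_le_mul_of_nonneg_right (pow_le_pow_right₀ one_le_two (by omega)) (sub_nonneg.2 t.2.2)
    exact ⟨g k 1, endpoint_mem_sweep (hk.trans ht.le), hpk.le⟩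

theorem exists_monotone_path_of_denseRange [CompactSpace X] [ConnectedSpace X]
    (hgc : ∀ k, Continuous (g k)) (hg0 : ∀ k, g k 0 = x) (hg1 : DenseRange fun k => g k 1) :
    ∃ K : I → NonemptyCompacts X, Continuous K ∧ Monotone K ∧ (K 0 : Set X) = {x} ∧
      (K 1 : Set X) = univ ∧ (∀ t, IsConnected (K t : Set X)) ∧
      ∀ t < 1, (K t : Set X) ⊆ ⋃ k, range (g k) := by
  set K : I → NonemptyCompacts X := fun t =>
    ⟨⟨sweep g t, isCompact_sweep hgc hg0 t⟩, ⟨x, mem_sweep hg0 t⟩⟩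
  exact ⟨K, continuous_sweep hgc hg0 hg1 fun _ => rfl, fun s t hst => monotone_sweep g hst,
    sweep_zero hg0, sweep_one g, isConnected_sweep hgc hg0, fun t => sweep_subset⟩

end SweepContinuity

theorem exists_arcs_of_dense_arcComponent {X : Type*} [MetricSpace X] [SeparableSpace X]
    {S : Set X} {x : X} (hx : x ∈ S) (hdense : Dense (arcComponent S x)) :
    ∃ g : ℕ → I → X, (∀ k, Continuous (g k)) ∧ (∀ k, g k 0 = x) ∧
      DenseRange (fun k => g k 1) ∧ ∀ k t, g k t ∈ S := by
  have : Nonempty (arcComponent S x) := ⟨⟨x, hx, Or.inl rfl⟩⟩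
  obtain ⟨y, hy⟩ := exists_dense_seq (arcComponent S x)
  have harc : ∀ k, ∃ f : I → X, Continuous f ∧ f 0 = x ∧ f 1 = y k ∧ ∀ t, f t ∈ S := by
    intro k
    obtain ⟨-, hxy | ⟨f, hf, -, hf0, hf1, hfS⟩⟩ := (y k).2
    · exact ⟨fun _ => x, continuous_const, rfl, hxy, fun _ => hx⟩
    · exact ⟨f, hf, hf0, hf1, hfS⟩
  choose g hgc hg0 hg1 hgS using harc
  refine ⟨g, hgc, hg0, ?_, hgS⟩
  rw [show (fun k => g k 1) = Subtype.val ∘ y from funext hg1]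
  exact hdense.denseRange_val.comp hy continuous_subtype_val

theorem isNonBlocker_of_dense_arcComponent {A : Set X} (hAcl : IsClosed A) (hAne : A.Nonempty)
    (hint : interior A = ∅) (hdense : ∀ x ∉ A, Dense (arcComponent Aᶜ x)) : IsNonBlocker A := by
  refine ⟨hAcl, hAne, fun h => by simp [h] at hint, fun x hx => ?_⟩
  obtain ⟨g, hgc, hg0, hg1, hgA⟩ := exists_arcs_of_dense_arcComponent hx (hdense x hx)
  obtain ⟨K, hKc, hKmono, hK0, hK1, hKconn, hKg⟩ :=
    exists_monotone_path_of_denseRange hgc hg0 hg1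
  have h01 : K 0 < K 1 := by
    refine SetLike.coe_ssubset_coe.1 ?_
    rw [hK0, hK1]
    obtain ⟨a, ha⟩ := hAne
    exact ssubset_univ_iff.2 fun h => hx (mem_singleton_iff.1 (h ▸ mem_univ a) ▸ ha)
  obtain ⟨φ, hφc, hφmono, hφ0, hφ1, hφlt⟩ := exists_strictMono_reparam hKc hKmono h01
  refine ⟨K ∘ φ, ⟨hφc, fun t => hKconn (φ t), fun s t hst =>
    SetLike.coe_ssubset_coe.2 (hφmono hst)⟩, by simp [hφ0, hK0], by simp [hφ1, hK1], fun t ht => ?_⟩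
  refine subset_empty_iff.1 fun p ⟨hp, hpA⟩ => ?_
  obtain ⟨_, ⟨k, rfl⟩, s, rfl⟩ := hKg (φ t) (hφlt t ht) hp
  exact hgA k s hpA

theorem dendroid_nonblocker_iff (hX : IsDendroid X) (A : Set X)
    (hAcl : IsClosed A) (hAne : A.Nonempty) :
    IsNonBlocker A ↔
      interior A = ∅ ∧ ∀ x ∉ A, Dense (arcComponent Aᶜ x) := by
  refine ⟨fun hA => ?_, fun ⟨hint, hdense⟩ =>
    isNonBlocker_of_dense_arcComponent hAcl hAne hint hdense⟩
  have hdense : ∀ x ∉ A, Dense (arcComponent Aᶜ x) := fun x hx => hA.dense_arcComponent hX hx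
  obtain ⟨x, hx⟩ := (ne_univ_iff_exists_notMem A).1 hA.2.2.1
  exact ⟨interior_eq_empty_iff_dense_compl.2 ((hdense x hx).mono fun _ hp => hp.1), hdense⟩
end

section
/- Let X be a dendroid such that some point of X is not a shore point, and let A be a subcontinuum of X. Then A is a connected nonblocker of singletons if and only if A has empty interior and X − A is arcwise connected. -/
open Set Metric TopologicalSpace unitInterval

variable {X : Type*} [MetricSpace X] [CompactSpace X] [ConnectedSpace X] [Nonempty X]

/-!
(⇒) The order arc from `{x}`, `x ∉ A`, to `X` avoids `A` before time `1`, so it provides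
subcontinua of `X ∖ A` containing `x` and Hausdorff-close to `X`; in particular `X ∖ A` is
dense. As `p` is not a shore point, all subcontinua close enough to `X` contain `p`, so any
two points `a, b ∉ A` lie in one continuum `K ⊆ X ∖ A`. By hereditary unicoherence the
intersection of `K` with the arc from `a` to `b` is connected, hence is the whole arc.

(⇐) Let `y n` be dense in `X ∖ A`. Starting from `{x}`, attach during the time interval
`[n, n + 1]` an arc of `X ∖ A` that leaves the current continuum at once and whose union with
it contains `y n`. This grows `{x}` strictly and continuously (in the Hausdorff metric) inside
`X ∖ A`, and tends to `X` as time goes to `∞` because the `y n` are dense; compressing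
`[0, ∞)` to `[0, 1)` gives the order arc.
-/

open Filter Topology

section Necessity

variable {X : Type*} [MetricSpace X]

theorem range_subset_of_isPreconnected {Y : Type*} [TopologicalSpace Y] [T2Space Y]
    {f : I → Y} (hf : Continuous f) (hinj : Function.Injective f) {C : Set Y}
    (hC : IsPreconnected C) (hCf : C ⊆ range f) (h0 : f 0 ∈ C) (h1 : f 1 ∈ C) :
    range f ⊆ C := by
  have hpre : IsPreconnected (f ⁻¹' C) := by
    rwa [← (hf.isClosedEmbedding hinj).isInducing.isPreconnected_image,
      image_preimage_eq_of_subset hCf]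
  rintro _ ⟨t, rfl⟩
  exact hpre.Icc_subset (a := 0) (b := 1) h0 h1 ⟨t.2.1, t.2.2⟩

theorem range_subset_of_isUnicoherent {K : Set X} {f : I → X} (hf : Continuous f)
    (hinj : Function.Injective f) (hK : IsCompact K) (hKc : IsConnected K)
    (h0 : f 0 ∈ K) (h1 : f 1 ∈ K) (hU : IsUnicoherent (K ∪ range f)) : range f ⊆ K := by
  have hC : IsConnected (K ∩ range f) :=
    hU K (range f) hK hKc (isCompact_range hf) (isConnected_range hf) rfl
  exact (range_subset_of_isPreconnected hf hinj hC.isPreconnected inter_subset_right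
    ⟨h0, 0, rfl⟩ ⟨h1, 1, rfl⟩).trans inter_subset_left

theorem IsNonBlocker.exists_continuum_hausdorffDist_lt {A : Set X} (hA : IsNonBlocker A)
    {x : X} (hx : x ∉ A) {ε : ℝ} (hε : 0 < ε) :
    ∃ C : Set X, IsCompact C ∧ IsConnected C ∧ x ∈ C ∧ C ⊆ Aᶜ ∧
      hausdorffDist C univ < ε := by
  obtain ⟨α, ⟨hαc, hαconn, hαmono⟩, hα0, hα1, hαA⟩ := hA.2.2.2 x hx
  have hnear : ∀ᶠ t in 𝓝[<] (1 : I), dist (α t) (α 1) < ε :=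
    (hαc.continuousWithinAt.tendsto).eventually (ball_mem_nhds _ hε)
  have : (𝓝[<] (1 : I)).NeBot := nhdsLT_neBot_of_exists_lt ⟨0, zero_lt_one⟩
  obtain ⟨t, hdist, ht⟩ := (hnear.and self_mem_nhdsWithin).exists
  have hxt : x ∈ (α t : Set X) := by
    rcases (nonneg' : 0 ≤ t).eq_or_lt with h | h
    · simp [← h, hα0]
    · exact (hαmono 0 t h).1 (by simp [hα0])
  refine ⟨α t, (α t).isCompact, hαconn t, hxt, fun q hq hqA => ?_, ?_⟩
  · exact (hαA t ht).subset ⟨hq, hqA⟩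
  · rwa [NonemptyCompacts.dist_eq, hα1] at hdist

theorem IsNonBlocker.dense_compl [CompactSpace X] {A : Set X} (hA : IsNonBlocker A) :
    Dense Aᶜ := by
  obtain ⟨x, hx⟩ := (ne_univ_iff_exists_notMem A).1 hA.2.2.1
  refine fun p => Metric.mem_closure_iff.2 fun ε hε => ?_
  obtain ⟨C, -, -, hxC, hCA, hCε⟩ := hA.exists_continuum_hausdorffDist_lt hx hε
  obtain ⟨q, hq, hpq⟩ := exists_dist_lt_of_hausdorffDist_lt' (mem_univ p) hCε
    (hausdorffEDist_ne_top_of_nonempty_of_bounded ⟨x, hxC⟩ ⟨x, trivial⟩ (.all _) (.all _))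
  exact ⟨q, hCA hq, by rwa [dist_comm]⟩

theorem exists_forall_mem_of_not_isShorePoint {p : X} (hp : ¬IsShorePoint p)
    (hne : ({p} : Set X) ≠ univ) :
    ∃ ε > 0, ∀ B : Set X, IsCompact B → IsConnected B →
      hausdorffDist B univ < ε → p ∈ B := by
  contrapose! hp
  refine ⟨isClosed_singleton, singleton_nonempty p, hne, fun ε hε => ?_⟩
  obtain ⟨B, hB, hBc, hBε, hpB⟩ := hp ε hε
  exact ⟨B, hB, hBc, hBε, inter_singleton_eq_empty.2 hpB⟩

end Necessity

theorem IsNonBlocker.isArcwiseConnected_compl (hX : IsDendroid X) {p : X}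
    (hp : ¬IsShorePoint p) {A : Set X} (hA : IsNonBlocker A) : IsArcwiseConnected Aᶜ := by
  intro a ha b hb
  obtain ⟨c, hc⟩ := hA.2.1
  have hne : ({p} : Set X) ≠ univ := fun h => by
    have hsub : (univ : Set X).Subsingleton := h ▸ subsingleton_singleton
    exact ha (hsub (mem_univ a) (mem_univ c) ▸ hc)
  obtain ⟨ε, hε, hεp⟩ := exists_forall_mem_of_not_isShorePoint hp hne
  obtain ⟨Ca, hCa, hCac, haC, hCaA, hCaε⟩ := hA.exists_continuum_hausdorffDist_lt ha hε
  obtain ⟨Cb, hCb, hCbc, hbC, hCbA, hCbε⟩ := hA.exists_continuum_hausdorffDist_lt hb hε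
  have hK : IsConnected (Ca ∪ Cb) :=
    hCac.union ⟨p, hεp Ca hCa hCac hCaε, hεp Cb hCb hCbc hCbε⟩ hCbc
  rcases hX.1 a trivial b trivial with rfl | ⟨f, hf, hinj, rfl, rfl, -⟩
  · exact Or.inl rfl
  have hfK : range f ⊆ Ca ∪ Cb := by
    refine range_subset_of_isUnicoherent hf hinj (hCa.union hCb) hK (.inl haC) (.inr hbC) ?_
    exact hX.2 _ ((hCa.union hCb).union (isCompact_range hf))
      (hK.union ⟨f 0, .inl haC, 0, rfl⟩ (isConnected_range hf))
  exact Or.inr ⟨f, hf, hinj, rfl, rfl, fun t => union_subset hCaA hCbA (hfK ⟨t, rfl⟩)⟩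

section Sufficiency

variable {X : Type*} [MetricSpace X]

structure IsExitArc (S K : Set X) (g : ℝ → X) : Prop where
  continuous : Continuous g
  injOn : InjOn g (Icc 0 1)
  range_subset : range g ⊆ S
  zero_mem : g 0 ∈ K
  notMem : ∀ a ∈ Ioc (0 : ℝ) 1, g a ∉ K

theorem IsExitArc.isConnected_union {S K : Set X} {g : ℝ → X} (hg : IsExitArc S K g)
    (hK : IsConnected K) {s : ℝ} (hs : 0 ≤ s) : IsConnected (K ∪ g '' Icc 0 s) :=
  hK.union ⟨g 0, hg.zero_mem, 0, ⟨le_rfl, hs⟩, rfl⟩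
    ((isConnected_Icc hs).image g hg.continuous.continuousOn)

theorem IsExitArc.image_subset {S K : Set X} {g : ℝ → X} (hg : IsExitArc S K g) (s : Set ℝ) :
    g '' s ⊆ S :=
  (image_subset_range g s).trans hg.range_subset

theorem IsExitArc.union_image_Icc_self {S K : Set X} {g : ℝ → X} (hg : IsExitArc S K g) :
    K ∪ g '' Icc 0 0 = K := by
  rw [Icc_self, image_singleton, union_eq_left, singleton_subset_iff]
  exact hg.zero_mem

/-- Cut an arc from `K` to a point outside `K` at its last visit to `K`. -/
theorem exists_isExitArc_of_arc {S K : Set X} (hK : IsClosed K) {f : I → X}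
    (hf : Continuous f) (hinj : Function.Injective f) (hfS : range f ⊆ S) (h0 : f 0 ∈ K)
    (h1 : f 1 ∉ K) : ∃ g, IsExitArc S K g ∧ g 1 = f 1 := by
  set F : ℝ → X := IccExtend zero_le_one f
  have hF : Continuous F := hf.Icc_extend'
  set T : Set ℝ := Icc 0 1 ∩ F ⁻¹' K
  have hT : IsClosed T := isClosed_Icc.inter (hK.preimage hF)
  set u := sSup T
  have huT : u ∈ T := hT.csSup_mem ⟨0, left_mem_Icc.2 zero_le_one, by simpa [F]⟩
    ⟨1, fun r hr => hr.1.2⟩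
  have hu1 : u < 1 := huT.1.2.lt_of_ne fun h => h1 (by simpa [F, h] using huT.2)
  have hmem : ∀ a ∈ Icc (0 : ℝ) 1, u + a * (1 - u) ∈ Icc (0 : ℝ) 1 := fun a ha =>
    ⟨by nlinarith [huT.1.1, ha.1], by nlinarith [ha.2]⟩
  refine ⟨fun a => F (u + a * (1 - u)),
    ⟨by fun_prop, fun a ha b hb hab => ?_, ?_, ?_, ?_⟩, ?_⟩
  · have := (hinj.injOn.comp (strictMonoOn_projIcc zero_le_one).injOn fun _ _ => mem_univ _)
      (hmem a ha) (hmem b hb) hab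
    nlinarith
  · rintro _ ⟨a, rfl⟩
    exact hfS (IccExtend_range _ f ▸ mem_range_self _)
  · simpa using huT.2
  · intro a ha haK
    have : u + a * (1 - u) ≤ u :=
      le_csSup ⟨1, fun r hr => hr.1.2⟩ ⟨hmem a (Ioc_subset_Icc_self ha), haK⟩
    nlinarith [ha.1]
  · simp [F]

theorem exists_isExitArc {S K : Set X} (hS : IsArcwiseConnected S) (hK : IsClosed K)
    (hKS : K ⊆ S) {x w : X} (hx : x ∈ K) (hw : w ∈ S) (hwK : w ∉ K) :
    ∃ g, IsExitArc S K g ∧ g 1 = w := by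
  rcases hS x (hKS hx) w hw with rfl | ⟨f, hf, hinj, rfl, rfl, hfS⟩
  · exact absurd hx hwK
  · exact exists_isExitArc_of_arc hK hf hinj (range_subset_iff.2 hfS) hx hwK

structure ArcChain (S : Set X) (x : X) (K : ℕ → Set X) (h : ℕ → ℝ → X) : Prop where
  zero : K 0 = {x}
  succ : ∀ n, K (n + 1) = K n ∪ h n '' Icc 0 1
  isExitArc : ∀ n, IsExitArc S (K n) (h n)

theorem exists_arcChain {S : Set X} (hS : IsArcwiseConnected S) (hSc : ¬IsClosed S) {x : X}
    (hx : x ∈ S) (y : ℕ → X) (hy : ∀ n, y n ∈ S) :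
    ∃ K h, ArcChain S x K h ∧ ∀ n, y n ∈ K (n + 1) := by
  -- stated for every `L`, so that `choose` yields a step function to iterate with `Nat.rec`
  have step (n : ℕ) (L : Set X) : ∃ g : ℝ → X, IsCompact L → L ⊆ S → x ∈ L →
      IsExitArc S L g ∧ y n ∈ L ∪ g '' Icc 0 1 := by
    by_cases hL : IsCompact L ∧ L ⊆ S ∧ x ∈ L
    · obtain ⟨hLc, hLS, hxL⟩ := hL
      obtain ⟨z, hzS, hzL⟩ : ∃ z ∈ S, z ∉ L :=
        not_subset.1 fun hSL => hSc (hLS.antisymm hSL ▸ hLc.isClosed)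
      by_cases hyL : y n ∈ L
      -- the arc has to leave `L` even then, for the growth to be strict
      · obtain ⟨g, hg, -⟩ := exists_isExitArc hS hLc.isClosed hLS hxL hzS hzL
        exact ⟨g, fun _ _ _ => ⟨hg, .inl hyL⟩⟩
      · obtain ⟨g, hg, hg1⟩ := exists_isExitArc hS hLc.isClosed hLS hxL (hy n) hyL
        exact ⟨g, fun _ _ _ => ⟨hg, .inr ⟨1, right_mem_Icc.2 zero_le_one, hg1⟩⟩⟩
    · exact ⟨fun _ => x, fun hLc hLS hxL => absurd ⟨hLc, hLS, hxL⟩ hL⟩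
  choose g hg using step
  let K : ℕ → Set X := fun n => Nat.rec {x} (fun n L => L ∪ g n L '' Icc 0 1) n
  have hK (n : ℕ) : IsCompact (K n) ∧ K n ⊆ S ∧ x ∈ K n := by
    induction n with
    | zero => exact ⟨isCompact_singleton, singleton_subset_iff.2 hx, rfl⟩
    | succ n ih =>
      have hgn := (hg n (K n) ih.1 ih.2.1 ih.2.2).1
      exact ⟨ih.1.union (isCompact_Icc.image hgn.continuous),
        union_subset ih.2.1 (hgn.image_subset _), .inl ih.2.2⟩
  have hgK (n : ℕ) := hg n (K n) (hK n).1 (hK n).2.1 (hK n).2.2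
  exact ⟨K, fun n => g n (K n), ⟨rfl, fun _ => rfl, fun n => (hgK n).1⟩, fun n => (hgK n).2⟩

theorem locallyFinite_Icc_natCast : LocallyFinite fun n : ℕ => Icc (n : ℝ) (n + 1) := by
  have := locallyFinite_Icc_of_tendsto (f := fun n : ℤ => (n : ℝ)) (g := fun n => n + 1)
    tendsto_intCast_atTop_atTop
    (tendsto_atBot_add_const_right _ 1 (tendsto_intCast_atBot_iff.2 tendsto_id))
  simpa [Function.comp_def] using this.comp_injective Nat.cast_injective

namespace ArcChain

variable {S : Set X} {x : X} {K : ℕ → Set X} {h : ℕ → ℝ → X}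

theorem monotone (c : ArcChain S x K h) : Monotone K :=
  monotone_nat_of_le_succ fun n => c.succ n ▸ subset_union_left

theorem mem (c : ArcChain S x K h) (n : ℕ) : x ∈ K n :=
  c.monotone (Nat.zero_le n) (c.zero ▸ rfl)

theorem isCompact (c : ArcChain S x K h) (n : ℕ) : IsCompact (K n) := by
  induction n with
  | zero => exact c.zero ▸ isCompact_singleton
  | succ n ih => exact c.succ n ▸ ih.union (isCompact_Icc.image (c.isExitArc n).continuous)

theorem isConnected (c : ArcChain S x K h) (n : ℕ) : IsConnected (K n) := by
  induction n with
  | zero => exact c.zero ▸ isConnected_singleton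
  | succ n ih => exact c.succ n ▸ (c.isExitArc n).isConnected_union ih zero_le_one

theorem subset (c : ArcChain S x K h) (n : ℕ) : K n ⊆ S := by
  induction n with
  | zero =>
    have hx : h 0 0 = x := by simpa [c.zero] using (c.isExitArc 0).zero_mem
    exact c.zero ▸ singleton_subset_iff.2 (hx ▸ (c.isExitArc 0).range_subset (mem_range_self 0))
  | succ n ih => exact c.succ n ▸ union_subset ih ((c.isExitArc n).image_subset _)

/-- The continuum reached at time `r ≥ 0` when the arc `h n` is attached during `[n, n + 1]`. -/
def level (K : ℕ → Set X) (h : ℕ → ℝ → X) (r : ℝ) : Set X :=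
  K ⌊r⌋₊ ∪ h ⌊r⌋₊ '' Icc 0 (r - ⌊r⌋₊)

theorem level_natCast (c : ArcChain S x K h) (n : ℕ) : level K h n = K n := by
  rw [level, Nat.floor_natCast, sub_self, (c.isExitArc n).union_image_Icc_self]

theorem level_eq (c : ArcChain S x K h) {n : ℕ} {r : ℝ} (hr : r ∈ Icc (n : ℝ) (n + 1)) :
    level K h r = K n ∪ h n '' Icc 0 (r - n) := by
  rcases hr.2.lt_or_eq with hlt | rfl
  · rw [level, (Nat.floor_eq_iff (n.cast_nonneg.trans hr.1)).2 ⟨hr.1, hlt⟩]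
  · rw [← Nat.cast_succ, c.level_natCast, c.succ, Nat.cast_succ, add_sub_cancel_left]

theorem subset_level (c : ArcChain S x K h) {n : ℕ} {r : ℝ} (hnr : (n : ℝ) ≤ r) :
    K n ⊆ level K h r :=
  (c.monotone (Nat.le_floor hnr)).trans subset_union_left

theorem level_subset_succ (c : ArcChain S x K h) (r : ℝ) :
    level K h r ⊆ K (⌊r⌋₊ + 1) := by
  rw [c.succ]
  refine union_subset_union_right _ (image_mono (Icc_subset_Icc_right ?_))
  linarith [Nat.lt_floor_add_one r]

theorem monotone_level (c : ArcChain S x K h) : Monotone (level K h) := by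
  intro r r' hrr
  rcases (Nat.floor_mono hrr).eq_or_lt with heq | hlt
  · rw [level, level, heq]
    exact union_subset_union_right _ (image_mono (Icc_subset_Icc_right (by linarith)))
  · exact (c.level_subset_succ r).trans
      (c.subset_level ((Nat.le_floor_iff' (Nat.succ_ne_zero _)).1 hlt))

theorem level_ssubset (c : ArcChain S x K h) {r r' : ℝ} (hr : 0 ≤ r) (hrr : r < r') :
    level K h r ⊂ level K h r' := by
  set n := ⌊r⌋₊
  have hnr : (n : ℝ) ≤ r := Nat.floor_le hr
  set a := min (r' - n) 1
  have ha : r - n < a := lt_min (by linarith) (by linarith [Nat.lt_floor_add_one r])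
  have ha1 : a ≤ 1 := min_le_right _ _
  refine ssubset_of_subset_not_subset (c.monotone_level hrr.le) fun hsub => ?_
  have hmem : h n a ∈ level K h r' := by
    refine c.monotone_level (show (n : ℝ) + a ≤ r' by linarith [min_le_left (r' - n) 1]) ?_
    rw [c.level_eq ⟨by linarith, by linarith⟩]
    exact .inr ⟨a, ⟨by linarith, by linarith⟩, rfl⟩
  rcases hsub hmem with haK | ⟨b, hb, hba⟩
  · exact (c.isExitArc n).notMem a ⟨by linarith, ha1⟩ haK
  · have := (c.isExitArc n).injOn ⟨hb.1, by linarith [hb.2]⟩ ⟨by linarith, ha1⟩ hba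
    linarith [hb.2]

theorem isCompact_level (c : ArcChain S x K h) (r : ℝ) : IsCompact (level K h r) :=
  (c.isCompact _).union (isCompact_Icc.image (c.isExitArc _).continuous)

theorem isConnected_level (c : ArcChain S x K h) {r : ℝ} (hr : 0 ≤ r) :
    IsConnected (level K h r) :=
  (c.isExitArc _).isConnected_union (c.isConnected _) (sub_nonneg.2 (Nat.floor_le hr))

theorem level_subset (c : ArcChain S x K h) (r : ℝ) : level K h r ⊆ S :=
  union_subset (c.subset _) ((c.isExitArc _).image_subset _)

def levelCompacts (c : ArcChain S x K h) (r : ℝ) : NonemptyCompacts X :=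
  ⟨⟨level K h r, c.isCompact_level r⟩, x, subset_union_left (c.mem _)⟩

theorem coe_levelCompacts (c : ArcChain S x K h) (r : ℝ) :
    (c.levelCompacts r : Set X) = level K h r :=
  rfl

theorem continuousOn_levelCompacts (c : ArcChain S x K h) :
    ContinuousOn c.levelCompacts (Ici 0) := by
  have hpiece (n : ℕ) : ContinuousOn c.levelCompacts (Icc n (n + 1)) := by
    let Kn : NonemptyCompacts X := ⟨⟨K n, c.isCompact n⟩, x, c.mem n⟩
    let I01 : NonemptyCompacts ℝ := ⟨⟨Icc 0 1, isCompact_Icc⟩, nonempty_Icc.2 zero_le_one⟩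
    have hh := (c.isExitArc n).continuous
    have hcont : Continuous fun r : ℝ =>
        Kn ⊔ I01.map (fun a => h n ((r - n) * a)) (by fun_prop) :=
      continuous_const.sup (Continuous.nonemptyCompacts_map' continuous_const (by fun_prop))
    refine hcont.continuousOn.congr fun r hr => NonemptyCompacts.ext ?_
    rw [coe_levelCompacts, c.level_eq hr, NonemptyCompacts.coe_sup, NonemptyCompacts.coe_map]
    rw [← image_image (h n) (fun a => (r - n) * a)]
    change _ = K n ∪ h n '' ((fun a => (r - n) * a) '' Icc 0 1)
    rw [image_mul_left_Icc (sub_nonneg.2 hr.1) zero_le_one, mul_zero, mul_one]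
  refine (locallyFinite_Icc_natCast.continuousOn_iUnion (fun _ => isClosed_Icc) hpiece).mono
    fun r hr => mem_iUnion.2 ⟨⌊r⌋₊, Nat.floor_le hr, (Nat.lt_floor_add_one r).le⟩

end ArcChain

end Sufficiency

theorem TopologicalSpace.NonemptyCompacts.tendsto_atTop_top_of_dense_iUnion {X : Type*}
    [MetricSpace X] [CompactSpace X] [Nonempty X] {ι : Type*} [SemilatticeSup ι] [Nonempty ι]
    {F : ι → NonemptyCompacts X} (hF : Monotone F) (hd : Dense (⋃ i, (F i : Set X))) :
    Tendsto F atTop (𝓝 ⊤) := by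
  refine Metric.tendsto_atTop.2 fun ε hε => ?_
  have hε2 := half_pos hε
  have hcover : (univ : Set X) ⊆ ⋃ z ∈ ⋃ i, (F i : Set X), ball z (ε / 2) := fun p _ => by
    obtain ⟨z, hz, hpz⟩ := Metric.mem_closure_iff.1 (hd p) _ hε2
    exact mem_iUnion₂.2 ⟨z, hz, mem_ball.2 hpz⟩
  obtain ⟨t, htF, htfin, hcov⟩ :=
    isCompact_univ.elim_finite_subcover_image (fun _ _ => isOpen_ball) hcover
  choose! i hi using fun z (hz : z ∈ t) => mem_iUnion.1 (htF hz)
  obtain ⟨N, hN⟩ := (htfin.image i).bddAbove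
  refine ⟨N, fun n hn => ?_⟩
  rw [NonemptyCompacts.dist_eq, NonemptyCompacts.coe_top]
  refine (hausdorffDist_le_of_mem_dist hε2.le (fun p _ => ⟨p, trivial, by simpa using hε2.le⟩)
    fun p _ => ?_).trans_lt (half_lt_self hε)
  obtain ⟨z, hz, hpz⟩ := mem_iUnion₂.1 (hcov (mem_univ p))
  exact ⟨z, hF ((hN (mem_image_of_mem i hz)).trans hn) (hi z hz), (mem_ball.1 hpz).le⟩

/-- A homeomorphism `[0, 1) ≃ [0, ∞)`; its value `-1` at `t = 1` is junk. -/
noncomputable def toRay (t : I) : ℝ := (1 - (t : ℝ))⁻¹ - 1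

theorem toRay_zero : toRay 0 = 0 := by simp [toRay]

theorem toRay_nonneg {t : I} (ht : (t : ℝ) < 1) : 0 ≤ toRay t :=
  sub_nonneg.2 (one_le_inv₀ (sub_pos.2 ht) |>.2 (by linarith [t.2.1]))

theorem toRay_lt_toRay {s t : I} (hst : s < t) (ht : (t : ℝ) < 1) : toRay s < toRay t := by
  have hst' : (s : ℝ) < t := hst
  exact sub_lt_sub_right ((inv_lt_inv₀ (by linarith) (sub_pos.2 ht)).2 (by linarith)) 1

theorem continuousOn_toRay : ContinuousOn toRay {t | (t : ℝ) < 1} := by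
  have h : ContinuousOn (fun t : I => 1 - (t : ℝ)) {t | (t : ℝ) < 1} := by fun_prop
  exact (h.inv₀ fun t ht => (sub_pos.2 ht).ne').sub continuousOn_const

theorem tendsto_toRay : Tendsto toRay (𝓝[<] 1) atTop := by
  have h : Tendsto (fun t : I => 1 - (t : ℝ)) (𝓝[<] 1) (𝓝[>] 0) := by
    refine tendsto_nhdsWithin_iff.2 ⟨?_, eventually_mem_nhdsWithin.mono fun t ht => ?_⟩
    · exact ((continuous_const.sub continuous_subtype_val).tendsto' 1 0 (by simp)).mono_left
        nhdsWithin_le_nhds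
    · exact sub_pos.2 (show (t : ℝ) < 1 from ht)
  unfold toRay
  simpa [sub_eq_add_neg] using tendsto_atTop_add_const_right _ (-1)
    (tendsto_inv_nhdsGT_zero.comp h)

theorem continuous_ite_toRay {Y : Type*} [TopologicalSpace Y] {F : ℝ → Y} {y : Y}
    (hF : ContinuousOn F (Ici 0)) (hFy : Tendsto F atTop (𝓝 y)) :
    Continuous fun t : I => if (t : ℝ) < 1 then F (toRay t) else y := by
  have hopen : IsOpen {t : I | (t : ℝ) < 1} := isOpen_lt continuous_subtype_val continuous_const
  refine continuous_iff_continuousAt.2 fun t => ?_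
  by_cases ht : (t : ℝ) < 1
  · refine ((hF.comp continuousOn_toRay fun s hs => toRay_nonneg hs).continuousAt
      (hopen.mem_nhds ht)).congr (eventually_of_mem (hopen.mem_nhds ht) fun s hs => ?_)
    exact (if_pos hs).symm
  · obtain rfl : t = 1 := le_antisymm le_one' (not_lt.1 ht)
    have hIic : Iic (1 : I) = univ := eq_univ_of_forall fun _ => le_one'
    rw [← continuousWithinAt_univ, ← hIic, ← continuousWithinAt_Iio_iff_Iic]
    simp only [ContinuousWithinAt, Set.Icc.coe_one, lt_irrefl, if_false]
    refine (hFy.comp tendsto_toRay).congr' (eventually_mem_nhdsWithin.mono fun s hs => ?_)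
    exact (if_pos hs).symm

theorem exists_orderArc_of_dense {S : Set X} (hS : IsArcwiseConnected S) (hSc : ¬IsClosed S)
    (hd : Dense S) {x : X} (hx : x ∈ S) :
    ∃ α : I → NonemptyCompacts X, IsOrderArc α ∧ (α 0 : Set X) = {x} ∧
      (α 1 : Set X) = univ ∧ ∀ t : I, t < 1 → (α t : Set X) ⊆ S := by
  have : Nonempty S := ⟨⟨x, hx⟩⟩
  obtain ⟨u, hu⟩ := exists_dense_seq S
  obtain ⟨K, h, c, hyK⟩ := exists_arcChain hS hSc hx (fun n => u n) fun n => (u n).2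
  have hlim : Tendsto c.levelCompacts atTop (𝓝 ⊤) := by
    refine NonemptyCompacts.tendsto_atTop_top_of_dense_iUnion
      (fun r r' hrr => c.monotone_level hrr)
      ((hd.denseRange_val.comp hu continuous_subtype_val).mono ?_)
    rintro _ ⟨n, rfl⟩
    exact mem_iUnion.2 ⟨n + 1, c.subset_level (by push_cast; rfl) (hyK n)⟩
  have hSuniv : S ≠ univ := fun h => hSc (h ▸ isClosed_univ)
  refine ⟨fun t => if (t : ℝ) < 1 then c.levelCompacts (toRay t) else ⊤,
    ⟨continuous_ite_toRay c.continuousOn_levelCompacts hlim, fun t => ?_, fun s t hst => ?_⟩,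
    ?_, ?_, fun t ht => ?_⟩
  · dsimp only
    split_ifs with ht
    · exact c.isConnected_level (toRay_nonneg ht)
    · exact isConnected_univ
  · have hs : (s : ℝ) < 1 := lt_of_lt_of_le hst le_one'
    simp only [if_pos hs]
    split_ifs with ht
    · exact c.level_ssubset (toRay_nonneg hs) (toRay_lt_toRay hst ht)
    · exact ssubset_univ_iff.2 fun h => hSuniv (eq_univ_of_univ_subset (h ▸ c.level_subset _))
  · simp only [Set.Icc.coe_zero, zero_lt_one, if_pos, toRay_zero, c.coe_levelCompacts]
    exact_mod_cast (c.level_natCast 0).trans c.zero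
  · simp
  · simp only [if_pos (show (t : ℝ) < 1 from ht)]
    exact c.level_subset _

theorem isNonBlocker_of_dense_compl {A : Set X} (hA : IsClosed A) (hne : A.Nonempty)
    (hd : Dense Aᶜ) (harc : IsArcwiseConnected Aᶜ) : IsNonBlocker A := by
  have hnc : ¬IsClosed Aᶜ := fun h =>
    hne.ne_empty (compl_univ_iff.1 (h.closure_eq ▸ hd.closure_eq))
  refine ⟨hA, hne, fun h => hnc (h ▸ compl_univ ▸ isClosed_empty), fun x hx => ?_⟩
  obtain ⟨α, hα, h0, h1, hαA⟩ := exists_orderArc_of_dense harc hnc hd hx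
  refine ⟨α, hα, h0, h1, fun t ht => ?_⟩
  exact disjoint_iff_inter_eq_empty.1 (subset_compl_iff_disjoint_right.1 (hαA t ht))

theorem dendroid_connected_nonblocker_iff (hX : IsDendroid X)
    (hpt : ∃ p : X, ¬ IsShorePoint p) (A : Set X)
    (hAc : IsCompact A) (hAconn : IsConnected A) :
    IsNonBlocker A ↔ interior A = ∅ ∧ IsArcwiseConnected Aᶜ := by
  obtain ⟨p, hp⟩ := hpt
  rw [interior_eq_empty_iff_dense_compl]
  exact ⟨fun hA => ⟨hA.dense_compl, hA.isArcwiseConnected_compl hX hp⟩,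
    fun ⟨hd, harc⟩ => isNonBlocker_of_dense_compl hAc.isClosed hAconn.nonempty hd harc⟩
end
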